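/- arXiv:1904.02603 — 6 statements merged into one kernel-verified Lean document; each statement's English description precedes it below -/
import Mathlib

section
/- Fix a mode n, a row index i ∈ Fin (I n), a column index j ∈ Fin (J n), and a regularization parameter λ > 0. Define, for a multi-index α and t ∈ Fin (J n), δ_α(t) = ∑_{β : β n = t} G β · ∏_{k ≠ n} A k (α k) (β k), and v(t) = ∑_{α ∈ Ω with α n = i} δ_α(t) · δ_α(j). Then the function of the single real variable x obtained from the L_F loss L_F(G, A^{(1)},...,A^{(N)}) by replacing the entry A n i j with x (all other entries of the factor matrices and the core tensor held fixed) attains its unique global minimum over ℝ at x* = ( (∑_{α ∈ Ω with α n = i} X α · δ_α(j)) − ∑_{t ≠ j} v(t) · A n i t ) / (v(j) + λ). -/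
open Finset

/-- The one-variable restriction of the `L_F` Tucker loss in the
factor-matrix entry `A n i j` attains its unique global minimum at
`x* = ((∑_{α ∈ Ω, α n = i} X α · δ_α(j)) − ∑_{t ≠ j} v(t) · A n i t) / (v(j) + λ)`. -/
theorem vest_factor_update_LF
    (N : ℕ) (hN : 1 ≤ N) (I J : Fin N → ℕ+)
    (X : (∀ k : Fin N, Fin (I k)) → ℝ)
    (Ω : Finset (∀ k : Fin N, Fin (I k)))
    (G : (∀ k : Fin N, Fin (J k)) → ℝ)
    (A : ∀ k : Fin N, Fin (I k) → Fin (J k) → ℝ)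
    (n : Fin N) (i : Fin (I n)) (j : Fin (J n))
    (lam : ℝ) (hlam : 0 < lam)
    -- the factor matrices with the entry `A n i j` replaced by `x`
    (A' : ℝ → ∀ k : Fin N, Fin (I k) → Fin (J k) → ℝ)
    (hA' : ∀ x : ℝ, A' x = Function.update A n
      (fun i' j' => if i' = i ∧ j' = j then x else A n i' j'))
    -- δ_α(t) = ∑_{β : β n = t} G β · ∏_{k ≠ n} A k (α k) (β k)
    (δ : (∀ k : Fin N, Fin (I k)) → Fin (J n) → ℝ)
    (hδ : ∀ α t, δ α t =
      ∑ β ∈ Finset.univ.filter (fun β : ∀ k : Fin N, Fin (J k) => β n = t),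
        G β * ∏ k ∈ Finset.univ.erase n, A k (α k) (β k))
    -- v(t) = ∑_{α ∈ Ω, α n = i} δ_α(t) · δ_α(j)
    (v : Fin (J n) → ℝ)
    (hv : ∀ t, v t = ∑ α ∈ Ω.filter (fun α => α n = i), δ α t * δ α j)
    -- the L_F loss as a function of x
    (L : ℝ → ℝ)
    (hL : ∀ x : ℝ, L x =
      (∑ α ∈ Ω, (X α - ∑ β : ∀ k : Fin N, Fin (J k),
          G β * ∏ k, A' x k (α k) (β k)) ^ 2)
      + lam * ((∑ β : ∀ k : Fin N, Fin (J k), (G β) ^ 2)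
        + ∑ m, ∑ i', ∑ j', (A' x m i' j') ^ 2))
    (xstar : ℝ)
    (hxstar : xstar =
      ((∑ α ∈ Ω.filter (fun α => α n = i), X α * δ α j)
        - ∑ t ∈ Finset.univ.erase j, v t * A n i t) / (v j + lam)) :
    ∀ x : ℝ, x ≠ xstar → L xstar < L x := by
  have hAk : ∀ (x : ℝ) (k : Fin N), k ≠ n → A' x k = A k := by
    intro x k hk; rw [hA']; exact Function.update_of_ne hk _ _
  have hAn : ∀ x : ℝ, A' x n = fun i' j' => if i' = i ∧ j' = j then x else A n i' j' := by
    intro x; rw [hA']; exact Function.update_self _ _ _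
  -- reconstruction in terms of δ
  have hB : ∀ (x : ℝ) (α : ∀ k : Fin N, Fin (I k)),
      (∑ β : ∀ k : Fin N, Fin (J k), G β * ∏ k, A' x k (α k) (β k))
        = ∑ t : Fin (J n), A' x n (α n) t * δ α t := by
    intro x α
    rw [← Finset.sum_fiberwise Finset.univ (fun β : ∀ k : Fin N, Fin (J k) => β n)
      (fun β => G β * ∏ k, A' x k (α k) (β k))]
    refine Finset.sum_congr rfl fun t _ => ?_
    rw [hδ, Finset.mul_sum]
    refine Finset.sum_congr rfl fun β hβ => ?_
    have hβn : β n = t := by simpa using (Finset.mem_filter.mp hβ).2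
    rw [← Finset.mul_prod_erase Finset.univ _ (Finset.mem_univ n)]
    have hpe : ∏ k ∈ Finset.univ.erase n, A' x k (α k) (β k)
        = ∏ k ∈ Finset.univ.erase n, A k (α k) (β k) :=
      Finset.prod_congr rfl fun k hk => by rw [hAk x k (Finset.ne_of_mem_erase hk)]
    rw [hpe, hβn]; ring
  have hBS : ∀ (x : ℝ) (α : ∀ k : Fin N, Fin (I k)), α n = i →
      (∑ t : Fin (J n), A' x n (α n) t * δ α t)
        = x * δ α j + ∑ t ∈ Finset.univ.erase j, A n i t * δ α t := by
    intro x α hα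
    rw [hα, hAn, ← Finset.add_sum_erase Finset.univ _ (Finset.mem_univ j)]
    congr 1
    · simp
    · refine Finset.sum_congr rfl fun t ht => ?_
      simp [Finset.ne_of_mem_erase ht]
  have hBnot : ∀ (x : ℝ) (α : ∀ k : Fin N, Fin (I k)), ¬(α n = i) →
      (∑ t : Fin (J n), A' x n (α n) t * δ α t)
        = ∑ t : Fin (J n), A n (α n) t * δ α t := by
    intro x α hα
    rw [hAn]
    refine Finset.sum_congr rfl fun t _ => ?_
    simp [hα]
  -- regularization term
  have hreg : ∀ x : ℝ, (∑ m, ∑ i', ∑ j', (A' x m i' j') ^ 2)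
      = x ^ 2 + ((∑ m ∈ Finset.univ.erase n, ∑ i', ∑ j', (A m i' j') ^ 2)
        + (∑ i' ∈ Finset.univ.erase i, ∑ j', (A n i' j') ^ 2)
        + ∑ j' ∈ Finset.univ.erase j, (A n i j') ^ 2) := by
    intro x
    rw [← Finset.add_sum_erase Finset.univ _ (Finset.mem_univ n)]
    have h2 : ∑ i', ∑ j', (A' x n i' j') ^ 2
        = x ^ 2 + ((∑ i' ∈ Finset.univ.erase i, ∑ j', (A n i' j') ^ 2)
          + ∑ j' ∈ Finset.univ.erase j, (A n i j') ^ 2) := by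
      rw [← Finset.add_sum_erase Finset.univ _ (Finset.mem_univ i)]
      have h3 : ∑ j', (A' x n i j') ^ 2
          = x ^ 2 + ∑ j' ∈ Finset.univ.erase j, (A n i j') ^ 2 := by
        rw [← Finset.add_sum_erase Finset.univ _ (Finset.mem_univ j), hAn]
        congr 1
        · simp
        · refine Finset.sum_congr rfl fun t ht => ?_
          simp [Finset.ne_of_mem_erase ht]
      have h4 : ∑ i' ∈ Finset.univ.erase i, ∑ j', (A' x n i' j') ^ 2
          = ∑ i' ∈ Finset.univ.erase i, ∑ j', (A n i' j') ^ 2 := by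
        refine Finset.sum_congr rfl fun i' hi' => Finset.sum_congr rfl fun j' _ => ?_
        rw [hAn]; simp [Finset.ne_of_mem_erase hi']
      rw [h3, h4]; ring
    have h5 : ∑ m ∈ Finset.univ.erase n, ∑ i', ∑ j', (A' x m i' j') ^ 2
        = ∑ m ∈ Finset.univ.erase n, ∑ i', ∑ j', (A m i' j') ^ 2 := by
      refine Finset.sum_congr rfl fun m hm => ?_
      rw [hAk x m (Finset.ne_of_mem_erase hm)]
    rw [h2, h5]; ring
  -- the quadratic form
  have key : ∀ x : ℝ, L x = (v j + lam) * x ^ 2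
      - (2 * ((∑ α ∈ Ω.filter (fun α => α n = i), X α * δ α j)
          - ∑ t ∈ Finset.univ.erase j, v t * A n i t)) * x
      + ((∑ α ∈ Ω.filter (fun α => α n = i),
            (X α - ∑ t ∈ Finset.univ.erase j, A n i t * δ α t) ^ 2)
        + (∑ α ∈ Ω.filter (fun α => ¬(α n = i)),
            (X α - ∑ t : Fin (J n), A n (α n) t * δ α t) ^ 2)
        + lam * ((∑ β : ∀ k : Fin N, Fin (J k), (G β) ^ 2)
          + ((∑ m ∈ Finset.univ.erase n, ∑ i', ∑ j', (A m i' j') ^ 2)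
            + (∑ i' ∈ Finset.univ.erase i, ∑ j', (A n i' j') ^ 2)
            + ∑ j' ∈ Finset.univ.erase j, (A n i j') ^ 2))) := by
    intro x
    rw [hL x, hreg x, ← Finset.sum_filter_add_sum_filter_not Ω (fun α => α n = i)]
    have e1 : ∑ α ∈ Ω.filter (fun α => α n = i),
        (X α - ∑ β : ∀ k : Fin N, Fin (J k), G β * ∏ k, A' x k (α k) (β k)) ^ 2
        = (∑ α ∈ Ω.filter (fun α => α n = i),
            (X α - ∑ t ∈ Finset.univ.erase j, A n i t * δ α t) ^ 2)
          + (v j) * x ^ 2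
          - ((∑ α ∈ Ω.filter (fun α => α n = i), X α * δ α j)
              - ∑ t ∈ Finset.univ.erase j, v t * A n i t) * (2 * x) := by
      have hterm : ∀ α ∈ Ω.filter (fun α => α n = i),
          (X α - ∑ β : ∀ k : Fin N, Fin (J k), G β * ∏ k, A' x k (α k) (β k)) ^ 2
          = (X α - ∑ t ∈ Finset.univ.erase j, A n i t * δ α t) ^ 2
            + (δ α j * δ α j) * x ^ 2
            - (X α * δ α j
                - ∑ t ∈ Finset.univ.erase j, A n i t * (δ α t * δ α j)) * (2 * x) := by
        intro α hα
        rw [hB, hBS x α (by simpa using (Finset.mem_filter.mp hα).2)]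
        have hs : ∑ t ∈ Finset.univ.erase j, A n i t * (δ α t * δ α j)
            = (∑ t ∈ Finset.univ.erase j, A n i t * δ α t) * δ α j := by
          rw [Finset.sum_mul]
          exact Finset.sum_congr rfl fun t _ => (mul_assoc _ _ _).symm
        rw [hs]; ring
      rw [Finset.sum_congr rfl hterm, Finset.sum_sub_distrib, Finset.sum_add_distrib,
        ← Finset.sum_mul, ← Finset.sum_mul, Finset.sum_sub_distrib]
      have hδδ : ∑ α ∈ Ω.filter (fun α => α n = i), δ α j * δ α j = v j := (hv j).symm
      have hswap : ∑ α ∈ Ω.filter (fun α => α n = i),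
          ∑ t ∈ Finset.univ.erase j, A n i t * (δ α t * δ α j)
          = ∑ t ∈ Finset.univ.erase j, v t * A n i t := by
        rw [Finset.sum_comm]
        refine Finset.sum_congr rfl fun t _ => ?_
        rw [← Finset.mul_sum, ← hv t, mul_comm]
      rw [hδδ, hswap]
    have e2 : ∑ α ∈ Ω.filter (fun α => ¬(α n = i)),
        (X α - ∑ β : ∀ k : Fin N, Fin (J k), G β * ∏ k, A' x k (α k) (β k)) ^ 2
        = ∑ α ∈ Ω.filter (fun α => ¬(α n = i)),
            (X α - ∑ t : Fin (J n), A n (α n) t * δ α t) ^ 2 := by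
      refine Finset.sum_congr rfl fun α hα => ?_
      rw [hB, hBnot x α (by simpa using (Finset.mem_filter.mp hα).2)]
    rw [e1, e2]; ring
  -- positivity of the leading coefficient
  have hvj : 0 ≤ v j := by
    rw [hv j]; exact Finset.sum_nonneg fun α _ => mul_self_nonneg _
  have ha : 0 < v j + lam := by linarith
  have hbstar : (∑ α ∈ Ω.filter (fun α => α n = i), X α * δ α j)
      - ∑ t ∈ Finset.univ.erase j, v t * A n i t = (v j + lam) * xstar := by
    rw [hxstar]; field_simp
  intro x hx
  have h1 := key x
  have h2 := key xstar
  have hne : x - xstar ≠ 0 := sub_ne_zero.mpr hx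
  have hsq : 0 < (x - xstar) ^ 2 := by positivity
  rw [hbstar] at h1 h2
  nlinarith [mul_pos ha hsq, h1, h2]
end

section
/- Fix a mode n, a row index i ∈ Fin (I n), a column index j ∈ Fin (J n), and λ > 0. Define, for a multi-index α and t ∈ Fin (J n), δ_α(t) = ∑_{β : β n = t} G β · ∏_{k ≠ n} A k (α k) (β k), and v(t) = ∑_{α ∈ Ω with α n = i} δ_α(t) · δ_α(j). Set g = −2·( (∑_{α ∈ Ω with α n = i} X α · δ_α(j)) − ∑_{t ≠ j} v(t) · A n i t ) and d = 2·v(j), and assume d > 0. Then the function of the single real variable x obtained from the L_1 loss L_1(G, A^{(1)},...,A^{(N)}) by replacing the entry A n i j with x (all other entries of the factor matrices and the core tensor held fixed) attains its unique global minimum over ℝ at x* = (λ − g)/d if g > λ, x* = −(λ + g)/d if g < −λ, and x* = 0 otherwise. -/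
open Finset

/-- The one-variable restriction of the `L_1` Tucker loss in the
factor-matrix entry `A n i j` attains its unique global minimum at the
soft-thresholding point: `x* = (λ − g)/d` if `g > λ`, `x* = −(λ + g)/d` if
`g < −λ`, and `x* = 0` otherwise, where
`g = −2·((∑_{α ∈ Ω, α n = i} X α · δ_α(j)) − ∑_{t ≠ j} v(t) · A n i t)` and
`d = 2·v(j) > 0`. -/
theorem vest_factor_update_L1
    (N : ℕ) (hN : 1 ≤ N) (I J : Fin N → ℕ+)
    (X : (∀ k : Fin N, Fin (I k)) → ℝ)
    (Ω : Finset (∀ k : Fin N, Fin (I k)))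
    (G : (∀ k : Fin N, Fin (J k)) → ℝ)
    (A : ∀ k : Fin N, Fin (I k) → Fin (J k) → ℝ)
    (n : Fin N) (i : Fin (I n)) (j : Fin (J n))
    (lam : ℝ) (hlam : 0 < lam)
    -- the factor matrices with the entry `A n i j` replaced by `x`
    (A' : ℝ → ∀ k : Fin N, Fin (I k) → Fin (J k) → ℝ)
    (hA' : ∀ x : ℝ, A' x = Function.update A n
      (fun i' j' => if i' = i ∧ j' = j then x else A n i' j'))
    -- δ_α(t) = ∑_{β : β n = t} G β · ∏_{k ≠ n} A k (α k) (β k)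
    (δ : (∀ k : Fin N, Fin (I k)) → Fin (J n) → ℝ)
    (hδ : ∀ α t, δ α t =
      ∑ β ∈ Finset.univ.filter (fun β : ∀ k : Fin N, Fin (J k) => β n = t),
        G β * ∏ k ∈ Finset.univ.erase n, A k (α k) (β k))
    -- v(t) = ∑_{α ∈ Ω, α n = i} δ_α(t) · δ_α(j)
    (v : Fin (J n) → ℝ)
    (hv : ∀ t, v t = ∑ α ∈ Ω.filter (fun α => α n = i), δ α t * δ α j)
    (g d : ℝ)
    (hg : g = -2 * ((∑ α ∈ Ω.filter (fun α => α n = i), X α * δ α j)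
      - ∑ t ∈ Finset.univ.erase j, v t * A n i t))
    (hd : d = 2 * v j) (hdpos : 0 < d)
    -- the L_1 loss as a function of x
    (L : ℝ → ℝ)
    (hL : ∀ x : ℝ, L x =
      (∑ α ∈ Ω, (X α - ∑ β : ∀ k : Fin N, Fin (J k),
          G β * ∏ k, A' x k (α k) (β k)) ^ 2)
      + lam * ((∑ β : ∀ k : Fin N, Fin (J k), |G β|)
        + ∑ m, ∑ i', ∑ j', |A' x m i' j'|))
    (xstar : ℝ)
    (hxstar : xstar =
      if lam < g then (lam - g) / d
      else if g < -lam then -(lam + g) / d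
      else 0) :
    ∀ x : ℝ, x ≠ xstar → L xstar < L x := by

  -- basic facts about A'
  have hAn : ∀ x : ℝ, A' x n = fun i' j' => if i' = i ∧ j' = j then x else A n i' j' := by
    intro x; rw [hA' x]; exact Function.update_self _ _ _
  have hAk : ∀ (x : ℝ) (k : Fin N), k ≠ n → A' x k = A k := by
    intro x k hk; rw [hA' x]; exact Function.update_of_ne hk _ _
  set a : ℝ := v j with ha_def
  have ha : 0 < a := by rw [hd] at hdpos; linarith
  -- reconstruction grouped by β n
  have hB : ∀ (x : ℝ) (α : ∀ k : Fin N, Fin (I k)),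
      (∑ β : ∀ k : Fin N, Fin (J k), G β * ∏ k, A' x k (α k) (β k))
        = ∑ t, A' x n (α n) t * δ α t := by
    intro x α
    rw [← Finset.sum_fiberwise Finset.univ (fun β : ∀ k : Fin N, Fin (J k) => β n)
      (fun β => G β * ∏ k, A' x k (α k) (β k))]
    refine Finset.sum_congr rfl (fun t _ => ?_)
    rw [hδ, Finset.mul_sum]
    refine Finset.sum_congr rfl (fun β hβ => ?_)
    have hβn : β n = t := by simpa using hβ
    have hprod : (∏ k, A' x k (α k) (β k))
        = A' x n (α n) (β n) * ∏ k ∈ Finset.univ.erase n, A k (α k) (β k) := by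
      rw [← Finset.mul_prod_erase Finset.univ _ (Finset.mem_univ n)]
      congr 1
      exact Finset.prod_congr rfl (fun k hk => by
        rw [hAk x k (Finset.ne_of_mem_erase hk)])
    rw [hprod, hβn]; ring
  -- the reconstruction for α with α n = i
  have hBi : ∀ (x : ℝ) (α : ∀ k : Fin N, Fin (I k)), α n = i →
      (∑ β : ∀ k : Fin N, Fin (J k), G β * ∏ k, A' x k (α k) (β k))
        = x * δ α j + ∑ t ∈ Finset.univ.erase j, A n i t * δ α t := by
    intro x α hα
    rw [hB x α, ← Finset.add_sum_erase Finset.univ _ (Finset.mem_univ j), hα, hAn]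
    congr 1
    · simp
    · refine Finset.sum_congr rfl (fun t ht => ?_)
      have htj : t ≠ j := Finset.ne_of_mem_erase ht
      simp [htj]
  -- the reconstruction for α with α n ≠ i does not depend on x
  have hBni : ∀ (x : ℝ) (α : ∀ k : Fin N, Fin (I k)), α n ≠ i →
      (∑ β : ∀ k : Fin N, Fin (J k), G β * ∏ k, A' x k (α k) (β k))
        = (∑ β : ∀ k : Fin N, Fin (J k), G β * ∏ k, A' 0 k (α k) (β k)) := by
    intro x α hα
    rw [hB x α, hB 0 α]
    refine Finset.sum_congr rfl (fun t _ => ?_)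
    rw [hAn, hAn]
    simp only
    rw [if_neg (fun h => hα h.1), if_neg (fun h => hα h.1)]
  -- the regularizer
  have hReg : ∀ x : ℝ, (∑ m, ∑ i', ∑ j', |A' x m i' j'|)
      = |x| + ∑ m, ∑ i', ∑ j', |A' 0 m i' j'| := by
    intro x
    have h : (∑ m, ∑ i', ∑ j', (|A' x m i' j'| - |A' 0 m i' j'|)) = |x| := by
      rw [Finset.sum_eq_single n]
      · rw [Finset.sum_eq_single i]
        · rw [Finset.sum_eq_single j]
          · rw [hAn, hAn]; simp
          · intro j' _ hj'
            rw [hAn, hAn]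
            simp only
            rw [if_neg (fun h => hj' h.2), if_neg (fun h => hj' h.2), sub_self]
          · intro h; exact absurd (Finset.mem_univ j) h
        · intro i' _ hi'
          refine Finset.sum_eq_zero (fun j' _ => ?_)
          rw [hAn, hAn]
          simp only
          rw [if_neg (fun h => hi' h.1), if_neg (fun h => hi' h.1), sub_self]
        · intro h; exact absurd (Finset.mem_univ i) h
      · intro m _ hm
        refine Finset.sum_eq_zero (fun i' _ => Finset.sum_eq_zero (fun j' _ => ?_))
        rw [hAk x m hm, hAk 0 m hm, sub_self]
      · intro h; exact absurd (Finset.mem_univ n) h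
    simp only [Finset.sum_sub_distrib] at h
    linarith
  -- per-entry decomposition
  set e : (∀ k : Fin N, Fin (I k)) → ℝ := fun α => if α n = i then δ α j else 0 with he_def
  have hBe : ∀ (x : ℝ) (α : ∀ k : Fin N, Fin (I k)),
      (∑ β : ∀ k : Fin N, Fin (J k), G β * ∏ k, A' x k (α k) (β k))
        = (∑ β : ∀ k : Fin N, Fin (J k), G β * ∏ k, A' 0 k (α k) (β k)) + x * e α := by
    intro x α
    by_cases hα : α n = i
    · rw [hBi x α hα, hBi 0 α hα, he_def]
      simp only [hα, if_pos]
      ring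
    · rw [hBni x α hα, he_def]
      simp only [hα, if_neg, if_false]
      ring
  -- sum of e² over Ω
  have hesq : (∑ α ∈ Ω, e α ^ 2) = a := by
    rw [ha_def, hv j]
    rw [← Finset.sum_filter_add_sum_filter_not Ω (fun α => α n = i) (fun α => e α ^ 2)]
    have h1 : (∑ α ∈ Ω.filter (fun α => α n = i), e α ^ 2)
        = ∑ α ∈ Ω.filter (fun α => α n = i), δ α j * δ α j := by
      refine Finset.sum_congr rfl (fun α hα => ?_)
      have : α n = i := (Finset.mem_filter.mp hα).2
      rw [he_def]; simp only [this, if_pos]; ring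
    have h2 : (∑ α ∈ Ω.filter (fun α => ¬ α n = i), e α ^ 2) = 0 := by
      refine Finset.sum_eq_zero (fun α hα => ?_)
      have : ¬ α n = i := (Finset.mem_filter.mp hα).2
      rw [he_def]; simp only [this, if_neg, if_false]; ring
    rw [h1, h2, add_zero]
  -- the cross term
  have hcross : (-2 : ℝ) * (∑ α ∈ Ω, e α * (X α -
      (∑ β : ∀ k : Fin N, Fin (J k), G β * ∏ k, A' 0 k (α k) (β k)))) = g := by
    rw [hg]
    have hsplit : (∑ α ∈ Ω, e α * (X α -
        (∑ β : ∀ k : Fin N, Fin (J k), G β * ∏ k, A' 0 k (α k) (β k))))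
        = ∑ α ∈ Ω.filter (fun α => α n = i), δ α j * (X α -
          ∑ t ∈ Finset.univ.erase j, A n i t * δ α t) := by
      rw [← Finset.sum_filter_add_sum_filter_not Ω (fun α => α n = i)]
      have h2 : (∑ α ∈ Ω.filter (fun α => ¬ α n = i), e α * (X α -
          (∑ β : ∀ k : Fin N, Fin (J k), G β * ∏ k, A' 0 k (α k) (β k)))) = 0 := by
        refine Finset.sum_eq_zero (fun α hα => ?_)
        have : ¬ α n = i := (Finset.mem_filter.mp hα).2
        rw [he_def]; simp only [this, if_neg, if_false]; ring
      rw [h2, add_zero]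
      refine Finset.sum_congr rfl (fun α hα => ?_)
      have hαn : α n = i := (Finset.mem_filter.mp hα).2
      rw [he_def, hBi 0 α hαn]
      simp only [hαn, if_pos]
      ring
    rw [hsplit]
    have hexp : (∑ α ∈ Ω.filter (fun α => α n = i), δ α j * (X α -
        ∑ t ∈ Finset.univ.erase j, A n i t * δ α t))
        = (∑ α ∈ Ω.filter (fun α => α n = i), X α * δ α j)
          - ∑ t ∈ Finset.univ.erase j, v t * A n i t := by
      have step : (∑ α ∈ Ω.filter (fun α => α n = i), δ α j * (X α -
          ∑ t ∈ Finset.univ.erase j, A n i t * δ α t))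
          = ∑ α ∈ Ω.filter (fun α => α n = i), (X α * δ α j -
            ∑ t ∈ Finset.univ.erase j, A n i t * (δ α t * δ α j)) := by
        refine Finset.sum_congr rfl (fun α _ => ?_)
        rw [mul_sub, Finset.mul_sum, mul_comm (δ α j) (X α)]
        congr 1
        exact Finset.sum_congr rfl (fun t _ => by ring)
      rw [step, Finset.sum_sub_distrib]
      congr 1
      rw [Finset.sum_comm]
      refine Finset.sum_congr rfl (fun t _ => ?_)
      rw [hv t, Finset.sum_mul]
      exact Finset.sum_congr rfl (fun α _ => by ring)
    rw [hexp]
  -- the key structural identity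
  have hLx : ∀ x : ℝ, L x = L 0 + (a * x ^ 2 + g * x + lam * |x|) := by
    intro x
    rw [hL x, hL 0, hReg x, hReg 0, abs_zero]
    have hsum : (∑ α ∈ Ω, (X α - ∑ β : ∀ k : Fin N, Fin (J k),
        G β * ∏ k, A' x k (α k) (β k)) ^ 2)
        = (∑ α ∈ Ω, (X α - ∑ β : ∀ k : Fin N, Fin (J k),
            G β * ∏ k, A' 0 k (α k) (β k)) ^ 2)
          + (x ^ 2 * ∑ α ∈ Ω, e α ^ 2)
          + x * (∑ α ∈ Ω, e α * (X α -
            (∑ β : ∀ k : Fin N, Fin (J k), G β * ∏ k, A' 0 k (α k) (β k)))) * (-2) := by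
      rw [Finset.mul_sum, Finset.mul_sum, Finset.sum_mul, ← Finset.sum_add_distrib,
        ← Finset.sum_add_distrib]
      refine Finset.sum_congr rfl (fun α _ => ?_)
      rw [hBe x α]
      ring
    rw [hsum, hesq]
    have : x * (∑ α ∈ Ω, e α * (X α -
        (∑ β : ∀ k : Fin N, Fin (J k), G β * ∏ k, A' 0 k (α k) (β k)))) * (-2) = g * x := by
      rw [← hcross]; ring
    rw [this]
    ring
  -- now the one-dimensional optimization
  intro x hx
  rw [hLx x, hLx xstar]
  have hkey : a * xstar ^ 2 + g * xstar + lam * |xstar|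
      < a * x ^ 2 + g * x + lam * |x| := by
    have hd2a : d = 2 * a := hd
    have hxx : 0 < (x - xstar) ^ 2 := by
      have := sub_ne_zero.mpr hx
      positivity
    have habs1 : x ≤ |x| := le_abs_self x
    have habs2 : -x ≤ |x| := neg_le_abs x
    by_cases h1 : lam < g
    · have hxs : xstar = (lam - g) / d := by rw [hxstar, if_pos h1]
      have hds : d * xstar = lam - g := by
        rw [hxs]; field_simp
      have hxneg : xstar < 0 := by
        rw [hxs]
        apply div_neg_of_neg_of_pos _ hdpos
        linarith
      have habsx : |xstar| = -xstar := abs_of_neg hxneg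
      have hgval : g = lam - 2 * a * xstar := by
        rw [hd2a] at hds; linarith
      rw [habsx, hgval]
      nlinarith [mul_nonneg hlam.le (by linarith : (0:ℝ) ≤ |x| + x), mul_pos ha hxx]
    · by_cases h2 : g < -lam
      · have hxs : xstar = -(lam + g) / d := by rw [hxstar, if_neg h1, if_pos h2]
        have hds : d * xstar = -(lam + g) := by
          rw [hxs]; field_simp
        have hxpos : 0 < xstar := by
          rw [hxs]
          apply div_pos _ hdpos
          linarith
        have habsx : |xstar| = xstar := abs_of_pos hxpos
        have hgval : g = -lam - 2 * a * xstar := by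
          rw [hd2a] at hds; linarith
        rw [habsx, hgval]
        nlinarith [mul_nonneg hlam.le (by linarith : (0:ℝ) ≤ |x| - x), mul_pos ha hxx]
      · have hxs : xstar = 0 := by rw [hxstar, if_neg h1, if_neg h2]
        push_neg at h1 h2
        rw [hxs]
        simp only [abs_zero]
        have hx0 : x ≠ 0 := by rw [hxs] at hx; exact hx
        have hxsq : 0 < x ^ 2 := by positivity
        nlinarith [mul_nonneg (by linarith : (0:ℝ) ≤ lam - g) (by linarith : (0:ℝ) ≤ |x| + x),
          mul_nonneg (by linarith : (0:ℝ) ≤ lam + g) (by linarith : (0:ℝ) ≤ |x| - x),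
          mul_pos ha hxsq]
  linarith
end

section
/- Fix a core multi-index β ∈ Π (n : Fin N), Fin (J n) and λ > 0. Set g = −2·∑_{α ∈ Ω} ( X α − ∑_{γ ≠ β} G γ · ∏_n A n (α n) (γ n) ) · ∏_n A n (α n) (β n) and d = 2·∑_{α ∈ Ω} ( ∏_n A n (α n) (β n) )², and assume d > 0. Then the function of the single real variable x obtained from the L_1 loss L_1(G, A^{(1)},...,A^{(N)}) by replacing the core entry G β with x (all other entries of the core tensor and all factor-matrix entries held fixed) attains its unique global minimum over ℝ at x* = (λ − g)/d if g > λ, x* = −(λ + g)/d if g < −λ, and x* = 0 otherwise. -/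
open Finset

lemma soft_thresh_min (g d lam xstar : ℝ) (hlam : 0 < lam) (hdpos : 0 < d)
    (hxstar : xstar =
      if lam < g then (lam - g) / d
      else if g < -lam then -(lam + g) / d
      else 0) :
    ∀ x : ℝ, x ≠ xstar →
      (d/2) * xstar^2 + g * xstar + lam * |xstar| <
      (d/2) * x^2 + g * x + lam * |x| := by
  intro x hx
  have hne : x - xstar ≠ 0 := sub_ne_zero.mpr hx
  have hxx : (x - xstar)^2 > 0 := by positivity
  rcases abs_cases x with ⟨h1, h2⟩ | ⟨h1, h2⟩ <;> rw [h1] <;>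
  · by_cases hc1 : lam < g
    · have hxs : xstar = (lam - g) / d := by rw [hxstar, if_pos hc1]
      have hxsd : d * xstar = lam - g := by rw [hxs]; field_simp
      have hxsneg : xstar < 0 := by
        rw [hxs]; apply div_neg_of_neg_of_pos (by linarith) hdpos
      rw [abs_of_neg hxsneg]
      nlinarith [sq_nonneg (x - xstar)]
    · by_cases hc2 : g < -lam
      · have hxs : xstar = -(lam + g) / d := by rw [hxstar, if_neg hc1, if_pos hc2]
        have hxsd : d * xstar = -(lam + g) := by rw [hxs]; field_simp
        have hxspos : 0 < xstar := by
          rw [hxs]; apply div_pos (by linarith) hdpos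
        rw [abs_of_pos hxspos]
        nlinarith [sq_nonneg (x - xstar)]
      · have hxs : xstar = 0 := by rw [hxstar, if_neg hc1, if_neg hc2]
        push_neg at hc1 hc2
        rw [hxs]; rw [hxs] at hx hxx
        simp only [abs_zero]
        nlinarith

/-- The one-variable restriction of the `L_1` Tucker loss in the
core entry `G β` attains its unique global minimum at the soft-thresholding
point: `x* = (λ − g)/d` if `g > λ`, `x* = −(λ + g)/d` if `g < −λ`, and
`x* = 0` otherwise, where
`g = −2·∑_{α ∈ Ω} (X α − ∑_{γ ≠ β} G γ · ∏ₙ A n (α n) (γ n)) · ∏ₙ A n (α n) (β n)`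
and `d = 2·∑_{α ∈ Ω} (∏ₙ A n (α n) (β n))² > 0`. -/
theorem vest_core_update_L1
    (N : ℕ) (hN : 1 ≤ N) (I J : Fin N → ℕ+)
    (X : (∀ k : Fin N, Fin (I k)) → ℝ)
    (Ω : Finset (∀ k : Fin N, Fin (I k)))
    (G : (∀ k : Fin N, Fin (J k)) → ℝ)
    (A : ∀ k : Fin N, Fin (I k) → Fin (J k) → ℝ)
    (β : ∀ k : Fin N, Fin (J k))
    (lam : ℝ) (hlam : 0 < lam)
    -- the core tensor with the entry `G β` replaced by `x`
    (G' : ℝ → (∀ k : Fin N, Fin (J k)) → ℝ)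
    (hG' : ∀ x : ℝ, G' x = Function.update G β x)
    (g d : ℝ)
    (hg : g = -2 * ∑ α ∈ Ω, (X α - ∑ γ ∈ Finset.univ.erase β,
        G γ * ∏ k, A k (α k) (γ k)) * ∏ k, A k (α k) (β k))
    (hd : d = 2 * ∑ α ∈ Ω, (∏ k, A k (α k) (β k)) ^ 2) (hdpos : 0 < d)
    -- the L_1 loss as a function of x
    (L : ℝ → ℝ)
    (hL : ∀ x : ℝ, L x =
      (∑ α ∈ Ω, (X α - ∑ γ : ∀ k : Fin N, Fin (J k),
          G' x γ * ∏ k, A k (α k) (γ k)) ^ 2)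
      + lam * ((∑ γ : ∀ k : Fin N, Fin (J k), |G' x γ|)
        + ∑ m, ∑ i', ∑ j', |A m i' j'|))
    (xstar : ℝ)
    (hxstar : xstar =
      if lam < g then (lam - g) / d
      else if g < -lam then -(lam + g) / d
      else 0) :
    ∀ x : ℝ, x ≠ xstar → L xstar < L x := by
  -- notation
  set P : (∀ k : Fin N, Fin (I k)) → ℝ := fun α => ∏ k, A k (α k) (β k) with hP
  set S : (∀ k : Fin N, Fin (I k)) → ℝ :=
    fun α => ∑ γ ∈ Finset.univ.erase β, G γ * ∏ k, A k (α k) (γ k) with hS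
  set K : ℝ := (∑ α ∈ Ω, (X α - S α)^2)
      + lam * ((∑ γ ∈ Finset.univ.erase β, |G γ|)
        + ∑ m, ∑ i', ∑ j', |A m i' j'|) with hK
  have hrep : ∀ x : ℝ, L x = (d/2) * x^2 + g * x + lam * |x| + K := by
    intro x
    have hsum1 : ∀ α : (∀ k : Fin N, Fin (I k)),
        (∑ γ : ∀ k : Fin N, Fin (J k), G' x γ * ∏ k, A k (α k) (γ k))
        = x * P α + S α := by
      intro α
      rw [hG', ← Finset.add_sum_erase _ _ (Finset.mem_univ β)]
      congr 1
      · rw [Function.update_self]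
      · apply Finset.sum_congr rfl
        intro γ hγ
        rw [Function.update_of_ne (Finset.ne_of_mem_erase hγ)]
    have hsum2 : (∑ γ : ∀ k : Fin N, Fin (J k), |G' x γ|)
        = |x| + ∑ γ ∈ Finset.univ.erase β, |G γ| := by
      rw [hG', ← Finset.add_sum_erase _ _ (Finset.mem_univ β)]
      congr 1
      · rw [Function.update_self]
      · apply Finset.sum_congr rfl
        intro γ hγ
        rw [Function.update_of_ne (Finset.ne_of_mem_erase hγ)]
    have e1 : ∑ α ∈ Ω, (X α - (x * P α + S α)) ^ 2
        = ∑ α ∈ Ω, ((X α - S α)^2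
            + ((-2*x) * ((X α - S α) * P α) + x^2 * (P α)^2)) :=
      Finset.sum_congr rfl (fun α _ => by ring)
    rw [hL]
    simp only [hsum1, hsum2]
    rw [e1, Finset.sum_add_distrib, Finset.sum_add_distrib,
      ← Finset.mul_sum, ← Finset.mul_sum, hK, hg, hd]
    ring
  intro x hx
  rw [hrep x, hrep xstar]
  have := soft_thresh_min g d lam xstar hlam hdpos hxstar x hx
  linarith
end

section
/- Fix a mode n, a row index i ∈ Fin (I n), and a column index j ∈ Fin (J n). Let B̃(α) denote the entry-wise reconstruction computed with the factor-matrix entry A n i j replaced by 0 (all other entries unchanged). Then the squared residual reconstruction error after pruning A n i j satisfies the identity ∑_{α ∈ Ω} (X α − B̃(α))² = ∑_{α ∈ Ω} (X α − B(α))² + ∑_{α ∈ Ω with α n = i} ( 2·(X α − B(α)) + B_{j_n=j}(α) ) · B_{j_n=j}(α), where B_{j_n=j}(α) = ∑_{β : β n = j} G β · ∏_k A k (α k) (β k). -/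
open Finset

/-- the squared residual reconstruction error after pruning the
factor-matrix entry `A n i j` (setting it to 0) satisfies
`∑_{α ∈ Ω} (X α − B̃(α))² = ∑_{α ∈ Ω} (X α − B(α))²
   + ∑_{α ∈ Ω, α n = i} (2·(X α − B(α)) + B_{jₙ=j}(α)) · B_{jₙ=j}(α)`. -/
theorem vest_residual_error_factor_prune
    (N : ℕ) (hN : 1 ≤ N) (I J : Fin N → ℕ+)
    (X : (∀ k : Fin N, Fin (I k)) → ℝ)
    (Ω : Finset (∀ k : Fin N, Fin (I k)))
    (G : (∀ k : Fin N, Fin (J k)) → ℝ)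
    (A : ∀ k : Fin N, Fin (I k) → Fin (J k) → ℝ)
    (n : Fin N) (i : Fin (I n)) (j : Fin (J n))
    -- the factor matrices with the entry `A n i j` replaced by 0
    (Atilde : ∀ k : Fin N, Fin (I k) → Fin (J k) → ℝ)
    (hAtilde : Atilde = Function.update A n
      (fun i' j' => if i' = i ∧ j' = j then 0 else A n i' j'))
    -- entry-wise reconstruction before pruning
    (B : (∀ k : Fin N, Fin (I k)) → ℝ)
    (hB : ∀ α, B α = ∑ β : ∀ k : Fin N, Fin (J k), G β * ∏ k, A k (α k) (β k))
    -- entry-wise reconstruction after pruning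
    (Btilde : (∀ k : Fin N, Fin (I k)) → ℝ)
    (hBtilde : ∀ α, Btilde α =
      ∑ β : ∀ k : Fin N, Fin (J k), G β * ∏ k, Atilde k (α k) (β k))
    -- the partial reconstruction B_{jₙ=j}(α)
    (P : (∀ k : Fin N, Fin (I k)) → ℝ)
    (hP : ∀ α, P α = ∑ β ∈ Finset.univ.filter
        (fun β : ∀ k : Fin N, Fin (J k) => β n = j),
      G β * ∏ k, A k (α k) (β k)) :
    ∑ α ∈ Ω, (X α - Btilde α) ^ 2
      = ∑ α ∈ Ω, (X α - B α) ^ 2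
        + ∑ α ∈ Ω.filter (fun α => α n = i),
            (2 * (X α - B α) + P α) * P α := by
  have hA0 : ∀ (β : ∀ k : Fin N, Fin (J k)), β n = j →
      ∀ (α : ∀ k : Fin N, Fin (I k)), α n = i →
      (∏ k, Atilde k (α k) (β k)) = 0 := by
    intro β hβ α hα
    apply Finset.prod_eq_zero (Finset.mem_univ n)
    rw [hAtilde, Function.update_self, if_pos ⟨hα, hβ⟩]
  have hAeq : ∀ (α : ∀ k : Fin N, Fin (I k)) (β : ∀ k : Fin N, Fin (J k)),
      ¬(α n = i ∧ β n = j) →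
      (∏ k, Atilde k (α k) (β k)) = ∏ k, A k (α k) (β k) := by
    intro α β h
    apply Finset.prod_congr rfl
    intro k _
    rcases eq_or_ne k n with rfl | hk
    · rw [hAtilde, Function.update_self]
      exact if_neg h
    · rw [hAtilde, Function.update_of_ne hk]
  have key1 : ∀ α, α n ≠ i → Btilde α = B α := by
    intro α hα
    rw [hBtilde, hB]
    exact Finset.sum_congr rfl fun β _ => by rw [hAeq α β (fun h => hα h.1)]
  have key2 : ∀ α, α n = i → Btilde α = B α - P α := by
    intro α hα
    rw [hBtilde, hB, hP, eq_sub_iff_add_eq]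
    rw [← Finset.sum_filter_add_sum_filter_not Finset.univ
        (fun β : ∀ k : Fin N, Fin (J k) => β n = j)
        (fun β => G β * ∏ k, A k (α k) (β k))]
    rw [← Finset.sum_filter_add_sum_filter_not Finset.univ
        (fun β : ∀ k : Fin N, Fin (J k) => β n = j)
        (fun β => G β * ∏ k, Atilde k (α k) (β k))]
    have h1 : ∑ β ∈ Finset.univ.filter (fun β : ∀ k : Fin N, Fin (J k) => β n = j),
        G β * ∏ k, Atilde k (α k) (β k) = 0 :=
      Finset.sum_eq_zero fun β hβ => by
        rw [hA0 β (Finset.mem_filter.mp hβ).2 α hα, mul_zero]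
    have h2 : ∑ β ∈ Finset.univ.filter (fun β : ∀ k : Fin N, Fin (J k) => ¬ β n = j),
        G β * ∏ k, Atilde k (α k) (β k)
        = ∑ β ∈ Finset.univ.filter (fun β : ∀ k : Fin N, Fin (J k) => ¬ β n = j),
        G β * ∏ k, A k (α k) (β k) :=
      Finset.sum_congr rfl fun β hβ => by
        rw [hAeq α β (fun h => (Finset.mem_filter.mp hβ).2 h.2)]
    rw [h1, h2]
    ring
  have main : ∀ α ∈ Ω, (X α - Btilde α) ^ 2
      = (X α - B α) ^ 2 + (if α n = i then (2 * (X α - B α) + P α) * P α else 0) := by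
    intro α _
    by_cases hα : α n = i
    · rw [key2 α hα, if_pos hα]; ring
    · rw [key1 α hα, if_neg hα]; ring
  rw [Finset.sum_congr rfl main, Finset.sum_add_distrib, Finset.sum_filter]
end

section
/- Fix a mode n, a row index i ∈ Fin (I n), a column index j ∈ Fin (J n), and λ > 0. Define δ_α(t) = ∑_{β : β n = t} G β · ∏_{k ≠ n} A k (α k) (β k) and v(t) = ∑_{α ∈ Ω with α n = i} δ_α(t) · δ_α(j). Then there exists a constant C ∈ ℝ, not depending on x, such that for every x ∈ ℝ the L_F loss with the entry A n i j replaced by x equals (v(j) + λ)·x² − 2·( (∑_{α ∈ Ω with α n = i} X α · δ_α(j)) − ∑_{t ≠ j} v(t) · A n i t )·x + C. -/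
open Finset

/-- as a function of the factor-matrix entry `A n i j`, the `L_F`
loss is the quadratic
`(v(j) + λ)·x² − 2·((∑_{α ∈ Ω, α n = i} X α · δ_α(j)) − ∑_{t ≠ j} v(t)·A n i t)·x + C`
for some constant `C` not depending on `x`. -/
theorem vest_factor_LF_quadratic_form
    (N : ℕ) (hN : 1 ≤ N) (I J : Fin N → ℕ+)
    (X : (∀ k : Fin N, Fin (I k)) → ℝ)
    (Ω : Finset (∀ k : Fin N, Fin (I k)))
    (G : (∀ k : Fin N, Fin (J k)) → ℝ)
    (A : ∀ k : Fin N, Fin (I k) → Fin (J k) → ℝ)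
    (n : Fin N) (i : Fin (I n)) (j : Fin (J n))
    (lam : ℝ) (hlam : 0 < lam)
    -- the factor matrices with the entry `A n i j` replaced by `x`
    (A' : ℝ → ∀ k : Fin N, Fin (I k) → Fin (J k) → ℝ)
    (hA' : ∀ x : ℝ, A' x = Function.update A n
      (fun i' j' => if i' = i ∧ j' = j then x else A n i' j'))
    -- δ_α(t) = ∑_{β : β n = t} G β · ∏_{k ≠ n} A k (α k) (β k)
    (δ : (∀ k : Fin N, Fin (I k)) → Fin (J n) → ℝ)
    (hδ : ∀ α t, δ α t =
      ∑ β ∈ Finset.univ.filter (fun β : ∀ k : Fin N, Fin (J k) => β n = t),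
        G β * ∏ k ∈ Finset.univ.erase n, A k (α k) (β k))
    -- v(t) = ∑_{α ∈ Ω, α n = i} δ_α(t) · δ_α(j)
    (v : Fin (J n) → ℝ)
    (hv : ∀ t, v t = ∑ α ∈ Ω.filter (fun α => α n = i), δ α t * δ α j)
    -- the L_F loss as a function of x
    (L : ℝ → ℝ)
    (hL : ∀ x : ℝ, L x =
      (∑ α ∈ Ω, (X α - ∑ β : ∀ k : Fin N, Fin (J k),
          G β * ∏ k, A' x k (α k) (β k)) ^ 2)
      + lam * ((∑ β : ∀ k : Fin N, Fin (J k), (G β) ^ 2)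
        + ∑ m, ∑ i', ∑ j', (A' x m i' j') ^ 2)) :
    ∃ C : ℝ, ∀ x : ℝ, L x =
      (v j + lam) * x ^ 2
      - 2 * ((∑ α ∈ Ω.filter (fun α => α n = i), X α * δ α j)
          - ∑ t ∈ Finset.univ.erase j, v t * A n i t) * x
      + C := by
  refine ⟨L 0, fun x => ?_⟩
  -- the reconstruction as a sum over the fiber index t
  have key : ∀ (y : ℝ) (α : ∀ k : Fin N, Fin (I k)),
      (∑ β : ∀ k : Fin N, Fin (J k), G β * ∏ k, A' y k (α k) (β k))
      = ∑ t : Fin (J n), A' y n (α n) t * δ α t := by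
    intro y α
    have h1 : ∀ β : ∀ k : Fin N, Fin (J k), ∏ k, A' y k (α k) (β k)
        = A' y n (α n) (β n) * ∏ k ∈ Finset.univ.erase n, A k (α k) (β k) := by
      intro β
      rw [← Finset.mul_prod_erase Finset.univ _ (Finset.mem_univ n)]
      congr 1
      refine Finset.prod_congr rfl fun k hk => ?_
      rw [hA', Function.update_of_ne (Finset.ne_of_mem_erase hk)]
    calc (∑ β : ∀ k : Fin N, Fin (J k), G β * ∏ k, A' y k (α k) (β k))
        = ∑ t : Fin (J n), ∑ β ∈ Finset.univ.filter
            (fun β : ∀ k : Fin N, Fin (J k) => β n = t),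
            G β * ∏ k, A' y k (α k) (β k) := by
          rw [Finset.sum_fiberwise_eq_sum_filter]
          simp
      _ = ∑ t : Fin (J n), A' y n (α n) t * δ α t := by
          refine Finset.sum_congr rfl fun t _ => ?_
          rw [hδ, Finset.mul_sum]
          refine Finset.sum_congr rfl fun β hβ => ?_
          have hβn : β n = t := by simpa using (Finset.mem_filter.mp hβ).2
          rw [h1 β, hβn]; ring
  have hAy_i : ∀ (y : ℝ) (t : Fin (J n)), A' y n i t = if t = j then y else A n i t := by
    intro y t
    rw [hA', Function.update_self]
    by_cases h : t = j <;> simp [h]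
  have keyi : ∀ (y : ℝ) (α : ∀ k : Fin N, Fin (I k)), α n = i →
      (∑ β : ∀ k : Fin N, Fin (J k), G β * ∏ k, A' y k (α k) (β k))
      = y * δ α j + ∑ t ∈ Finset.univ.erase j, A n i t * δ α t := by
    intro y α hα
    rw [key]
    rw [← Finset.add_sum_erase _ _ (Finset.mem_univ j)]
    congr 1
    · rw [hα, hAy_i]; simp
    · refine Finset.sum_congr rfl fun t ht => ?_
      rw [hα, hAy_i, if_neg (Finset.ne_of_mem_erase ht)]
  have keyne : ∀ (y : ℝ) (α : ∀ k : Fin N, Fin (I k)), ¬ α n = i →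
      (∑ β : ∀ k : Fin N, Fin (J k), G β * ∏ k, A' y k (α k) (β k))
      = ∑ t : Fin (J n), A n (α n) t * δ α t := by
    intro y α hα
    rw [key]
    refine Finset.sum_congr rfl fun t _ => ?_
    rw [hA', Function.update_self]
    simp [hα]
  -- the data-fit term split over the fiber α n = i
  have hS : ∀ y : ℝ,
      (∑ α ∈ Ω, (X α - ∑ β : ∀ k : Fin N, Fin (J k),
          G β * ∏ k, A' y k (α k) (β k)) ^ 2)
      = (∑ α ∈ Ω.filter (fun α => α n = i),
          (X α - (y * δ α j + ∑ t ∈ Finset.univ.erase j, A n i t * δ α t)) ^ 2)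
        + ∑ α ∈ Ω.filter (fun α => ¬ α n = i),
            (X α - ∑ t : Fin (J n), A n (α n) t * δ α t) ^ 2 := by
    intro y
    rw [← Finset.sum_filter_add_sum_filter_not Ω (fun α => α n = i)]
    congr 1
    · exact Finset.sum_congr rfl fun α hα => by
        rw [keyi y α (Finset.mem_filter.mp hα).2]
    · exact Finset.sum_congr rfl fun α hα => by
        rw [keyne y α (Finset.mem_filter.mp hα).2]
  -- the regularisation term
  have hE : ∀ y : ℝ, (∑ m, ∑ i', ∑ j', (A' y m i' j') ^ 2)
      = y ^ 2 + ((∑ m ∈ Finset.univ.erase n, ∑ i', ∑ j', (A m i' j') ^ 2)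
        + (∑ i' ∈ Finset.univ.erase i, ∑ j', (A n i' j') ^ 2)
        + ∑ j' ∈ Finset.univ.erase j, (A n i j') ^ 2) := by
    intro y
    rw [← Finset.add_sum_erase _ _ (Finset.mem_univ n)]
    have h2 : (∑ i', ∑ j', (A' y n i' j') ^ 2)
        = y ^ 2 + ((∑ i' ∈ Finset.univ.erase i, ∑ j', (A n i' j') ^ 2)
          + ∑ j' ∈ Finset.univ.erase j, (A n i j') ^ 2) := by
      rw [← Finset.add_sum_erase _ _ (Finset.mem_univ i)]
      have h3 : (∑ j', (A' y n i j') ^ 2)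
          = y ^ 2 + ∑ j' ∈ Finset.univ.erase j, (A n i j') ^ 2 := by
        rw [← Finset.add_sum_erase _ _ (Finset.mem_univ j)]
        congr 1
        · rw [hAy_i]; simp
        · refine Finset.sum_congr rfl fun t ht => ?_
          rw [hAy_i, if_neg (Finset.ne_of_mem_erase ht)]
      rw [h3]
      have h4 : (∑ i' ∈ Finset.univ.erase i, ∑ j', (A' y n i' j') ^ 2)
          = ∑ i' ∈ Finset.univ.erase i, ∑ j', (A n i' j') ^ 2 := by
        refine Finset.sum_congr rfl fun i' hi' => Finset.sum_congr rfl fun j' _ => ?_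
        rw [hA', Function.update_self]
        simp [Finset.ne_of_mem_erase hi']
      rw [h4]; ring
    have h5 : (∑ m ∈ Finset.univ.erase n, ∑ i', ∑ j', (A' y m i' j') ^ 2)
        = ∑ m ∈ Finset.univ.erase n, ∑ i', ∑ j', (A m i' j') ^ 2 := by
      refine Finset.sum_congr rfl fun m hm => ?_
      rw [hA', Function.update_of_ne (Finset.ne_of_mem_erase hm)]
    rw [h2, h5]; ring
  -- the quadratic expansion of the data-fit term on the fiber
  have hswap : (∑ α ∈ Ω.filter (fun α => α n = i),
        δ α j * (∑ t ∈ Finset.univ.erase j, A n i t * δ α t))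
      = ∑ t ∈ Finset.univ.erase j, v t * A n i t := by
    simp_rw [Finset.mul_sum]
    rw [Finset.sum_comm]
    refine Finset.sum_congr rfl fun t _ => ?_
    rw [hv t, Finset.sum_mul]
    exact Finset.sum_congr rfl fun α _ => by ring
  have hquad : ∀ y : ℝ,
      (∑ α ∈ Ω.filter (fun α => α n = i),
          (X α - (y * δ α j + ∑ t ∈ Finset.univ.erase j, A n i t * δ α t)) ^ 2)
      = y ^ 2 * v j
        - 2 * ((∑ α ∈ Ω.filter (fun α => α n = i), X α * δ α j)
            - ∑ t ∈ Finset.univ.erase j, v t * A n i t) * y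
        + ∑ α ∈ Ω.filter (fun α => α n = i),
            (X α - ((0 : ℝ) * δ α j + ∑ t ∈ Finset.univ.erase j, A n i t * δ α t)) ^ 2 := by
    intro y
    have expand : ∀ α : ∀ k : Fin N, Fin (I k),
        (X α - (y * δ α j + ∑ t ∈ Finset.univ.erase j, A n i t * δ α t)) ^ 2
        = y ^ 2 * (δ α j * δ α j)
          - 2 * y * (X α * δ α j
              - δ α j * (∑ t ∈ Finset.univ.erase j, A n i t * δ α t))
          + (X α - ((0 : ℝ) * δ α j + ∑ t ∈ Finset.univ.erase j, A n i t * δ α t)) ^ 2 := by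
      intro α; ring
    simp_rw [expand]
    rw [Finset.sum_add_distrib, Finset.sum_sub_distrib, ← Finset.mul_sum,
      ← Finset.mul_sum, Finset.sum_sub_distrib, hswap, ← hv j]
    ring
  -- put everything together
  rw [hL x, hL 0, hS x, hS 0, hE x, hE 0, hquad x, hquad 0]
  ring
end

section
/- Fix a mode n, a row index i ∈ Fin (I n), a column index j ∈ Fin (J n), and λ > 0. Define δ_α(t) = ∑_{β : β n = t} G β · ∏_{k ≠ n} A k (α k) (β k) and v(t) = ∑_{α ∈ Ω with α n = i} δ_α(t) · δ_α(j). Then there exists a constant C ∈ ℝ, not depending on x, such that for every x ∈ ℝ the L_1 loss with the entry A n i j replaced by x equals v(j)·x² − 2·( (∑_{α ∈ Ω with α n = i} X α · δ_α(j)) − ∑_{t ≠ j} v(t) · A n i t )·x + λ·|x| + C. -/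
open Finset

/-- as a function of the factor-matrix entry `A n i j`, the `L_1`
loss equals
`v(j)·x² − 2·((∑_{α ∈ Ω, α n = i} X α · δ_α(j)) − ∑_{t ≠ j} v(t)·A n i t)·x + λ·|x| + C`
for some constant `C` not depending on `x`. -/
theorem vest_factor_L1_form
    (N : ℕ) (hN : 1 ≤ N) (I J : Fin N → ℕ+)
    (X : (∀ k : Fin N, Fin (I k)) → ℝ)
    (Ω : Finset (∀ k : Fin N, Fin (I k)))
    (G : (∀ k : Fin N, Fin (J k)) → ℝ)
    (A : ∀ k : Fin N, Fin (I k) → Fin (J k) → ℝ)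
    (n : Fin N) (i : Fin (I n)) (j : Fin (J n))
    (lam : ℝ) (hlam : 0 < lam)
    -- the factor matrices with the entry `A n i j` replaced by `x`
    (A' : ℝ → ∀ k : Fin N, Fin (I k) → Fin (J k) → ℝ)
    (hA' : ∀ x : ℝ, A' x = Function.update A n
      (fun i' j' => if i' = i ∧ j' = j then x else A n i' j'))
    -- δ_α(t) = ∑_{β : β n = t} G β · ∏_{k ≠ n} A k (α k) (β k)
    (δ : (∀ k : Fin N, Fin (I k)) → Fin (J n) → ℝ)
    (hδ : ∀ α t, δ α t =
      ∑ β ∈ Finset.univ.filter (fun β : ∀ k : Fin N, Fin (J k) => β n = t),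
        G β * ∏ k ∈ Finset.univ.erase n, A k (α k) (β k))
    -- v(t) = ∑_{α ∈ Ω, α n = i} δ_α(t) · δ_α(j)
    (v : Fin (J n) → ℝ)
    (hv : ∀ t, v t = ∑ α ∈ Ω.filter (fun α => α n = i), δ α t * δ α j)
    -- the L_1 loss as a function of x
    (L : ℝ → ℝ)
    (hL : ∀ x : ℝ, L x =
      (∑ α ∈ Ω, (X α - ∑ β : ∀ k : Fin N, Fin (J k),
          G β * ∏ k, A' x k (α k) (β k)) ^ 2)
      + lam * ((∑ β : ∀ k : Fin N, Fin (J k), |G β|)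
        + ∑ m, ∑ i', ∑ j', |A' x m i' j'|)) :
    ∃ C : ℝ, ∀ x : ℝ, L x =
      v j * x ^ 2
      - 2 * ((∑ α ∈ Ω.filter (fun α => α n = i), X α * δ α j)
          - ∑ t ∈ Finset.univ.erase j, v t * A n i t) * x
      + lam * |x| + C := by
  classical
  -- decomposition of the reconstruction
  have hB : ∀ (x : ℝ) (α : ∀ k : Fin N, Fin (I k)),
      (∑ β : ∀ k : Fin N, Fin (J k), G β * ∏ k, A' x k (α k) (β k))
      = ∑ t, A' x n (α n) t * δ α t := by
    intro x α
    rw [← Finset.sum_fiberwise (Finset.univ) (fun β : ∀ k : Fin N, Fin (J k) => β n)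
      (fun β => G β * ∏ k, A' x k (α k) (β k))]
    refine Finset.sum_congr rfl fun t _ => ?_
    rw [hδ, Finset.mul_sum]
    refine Finset.sum_congr rfl fun β hβ => ?_
    have hβn : β n = t := (Finset.mem_filter.mp hβ).2
    rw [← Finset.mul_prod_erase Finset.univ (fun k => A' x k (α k) (β k)) (Finset.mem_univ n)]
    have hrest : ∏ k ∈ Finset.univ.erase n, A' x k (α k) (β k)
        = ∏ k ∈ Finset.univ.erase n, A k (α k) (β k) := by
      refine Finset.prod_congr rfl fun k hk => ?_
      rw [hA', Function.update_of_ne (Finset.ne_of_mem_erase hk)]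
    rw [hrest, hβn]; ring
  -- regularizer decomposition
  have hAx : ∀ (x : ℝ) (i' : Fin (I n)) (j' : Fin (J n)),
      A' x n i' j' = if i' = i ∧ j' = j then x else A n i' j' := by
    intro x i' j'
    rw [hA', Function.update_self]
  have hT : ∀ x : ℝ, (∑ m, ∑ i', ∑ j', |A' x m i' j'|)
      = |x| + ∑ m, ∑ i', ∑ j', |A' 0 m i' j'| := by
    intro x
    have hdiff : (∑ m, ∑ i', ∑ j', |A' x m i' j'|) - (∑ m, ∑ i', ∑ j', |A' 0 m i' j'|)
        = ∑ m, ((∑ i', ∑ j', |A' x m i' j'|) - (∑ i', ∑ j', |A' 0 m i' j'|)) := by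
      rw [Finset.sum_sub_distrib]
    have hmain : ∑ m, ((∑ i', ∑ j', |A' x m i' j'|) - (∑ i', ∑ j', |A' 0 m i' j'|)) = |x| := by
      rw [Finset.sum_eq_single n]
      · have : ((∑ i', ∑ j', |A' x n i' j'|) - (∑ i', ∑ j', |A' 0 n i' j'|))
            = ∑ i', ((∑ j', |A' x n i' j'|) - (∑ j', |A' 0 n i' j'|)) := by
          rw [Finset.sum_sub_distrib]
        rw [this, Finset.sum_eq_single i]
        · have : ((∑ j', |A' x n i j'|) - (∑ j', |A' 0 n i j'|))
              = ∑ j', (|A' x n i j'| - |A' 0 n i j'|) := by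
            rw [Finset.sum_sub_distrib]
          rw [this, Finset.sum_eq_single j]
          · rw [hAx, hAx, if_pos ⟨rfl, rfl⟩, if_pos ⟨rfl, rfl⟩]
            simp
          · intro b _ hb
            rw [hAx, hAx, if_neg (fun h => hb h.2), if_neg (fun h => hb h.2), sub_self]
          · intro h; exact absurd (Finset.mem_univ j) h
        · intro b _ hb
          have heq : ∀ j', A' x n b j' = A' 0 n b j' := by
            intro j'
            rw [hAx, hAx, if_neg (fun h => hb h.1), if_neg (fun h => hb h.1)]
          simp only [heq, sub_self]
        · intro h; exact absurd (Finset.mem_univ i) h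
      · intro m _ hm
        have heq : ∀ i' j', A' x m i' j' = A' 0 m i' j' := by
          intro i' j'
          rw [hA', hA', Function.update_of_ne hm, Function.update_of_ne hm]
        simp only [heq, sub_self]
      · intro h; exact absurd (Finset.mem_univ n) h
    linarith [hdiff, hmain]
  -- constant c α
  set c : (∀ k : Fin N, Fin (I k)) → ℝ :=
    fun α => ∑ t ∈ Finset.univ.erase j, A n i t * δ α t with hc
  -- the constant C
  refine ⟨(∑ α ∈ Ω.filter (fun α => α n = i), (X α - c α) ^ 2)
      + (∑ α ∈ Ω.filter (fun α => ¬ α n = i),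
          (X α - ∑ t, A n (α n) t * δ α t) ^ 2)
      + lam * ((∑ β : ∀ k : Fin N, Fin (J k), |G β|)
        + ∑ m, ∑ i', ∑ j', |A' 0 m i' j'|), ?_⟩
  intro x
  rw [hL, hT]
  simp only [hB]
  rw [← Finset.sum_filter_add_sum_filter_not Ω (fun α => α n = i)
      (fun α => (X α - ∑ t, A' x n (α n) t * δ α t) ^ 2)]
  -- sum over α with α n ≠ i is constant
  have houter : ∑ α ∈ Ω.filter (fun α => ¬ α n = i),
      (X α - ∑ t, A' x n (α n) t * δ α t) ^ 2
      = ∑ α ∈ Ω.filter (fun α => ¬ α n = i),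
        (X α - ∑ t, A n (α n) t * δ α t) ^ 2 := by
    refine Finset.sum_congr rfl fun α hα => ?_
    have hαn : ¬ α n = i := by
      have := (Finset.mem_filter.mp hα).2
      simpa using this
    have : ∀ t, A' x n (α n) t = A n (α n) t := fun t => by
      rw [hAx, if_neg (fun h => hαn h.1)]
    simp only [this]
  rw [houter]
  -- sum over α with α n = i
  have hinner : ∑ α ∈ Ω.filter (fun α => α n = i),
      (X α - ∑ t, A' x n (α n) t * δ α t) ^ 2
      = (∑ α ∈ Ω.filter (fun α => α n = i), δ α j * δ α j) * x ^ 2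
        - ((∑ α ∈ Ω.filter (fun α => α n = i), (X α * δ α j - c α * δ α j))) * (2 * x)
        + ∑ α ∈ Ω.filter (fun α => α n = i), (X α - c α) ^ 2 := by
    rw [Finset.sum_mul, Finset.sum_mul, ← Finset.sum_sub_distrib, ← Finset.sum_add_distrib]
    refine Finset.sum_congr rfl fun α hα => ?_
    have hαn : α n = i := (Finset.mem_filter.mp hα).2
    have hsum : ∑ t, A' x n (α n) t * δ α t = x * δ α j + c α := by
      rw [← Finset.add_sum_erase Finset.univ (fun t => A' x n (α n) t * δ α t)
        (Finset.mem_univ j)]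
      congr 1
      · rw [hAx, hαn, if_pos ⟨rfl, rfl⟩]
      · refine Finset.sum_congr rfl fun t ht => ?_
        rw [hAx, hαn, if_neg (fun h => (Finset.ne_of_mem_erase ht) h.2)]
    rw [hsum]; ring
  rw [hinner]
  -- identify coefficients
  have hvj : ∑ α ∈ Ω.filter (fun α => α n = i), δ α j * δ α j = v j := by
    rw [hv]
  have hcross : ∑ α ∈ Ω.filter (fun α => α n = i), c α * δ α j
      = ∑ t ∈ Finset.univ.erase j, v t * A n i t := by
    have : ∀ α, c α * δ α j = ∑ t ∈ Finset.univ.erase j, A n i t * (δ α t * δ α j) := by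
      intro α
      rw [hc, Finset.sum_mul]
      exact Finset.sum_congr rfl fun t _ => by ring
    simp only [this]
    rw [Finset.sum_comm]
    refine Finset.sum_congr rfl fun t _ => ?_
    rw [← Finset.mul_sum, ← hv]; ring
  rw [Finset.sum_sub_distrib, hvj, hcross]
  ring
end
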